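/- arXiv:1506.04218 — 4 statements merged into one kernel-verified Lean document; each statement's English description precedes it below -/
import Mathlib

section
/- Let K be a field of characteristic zero and let (A, m_k, Q) be an n-cyclic A∞-algebra over K. Then for every element x ∈ A^1 of degree 1 and every integer k ≥ 0, one has Σ_{k1+k2=k+1, k1,k2 ≥ 0} Q(m_{k1}(x, …, x), m_{k2}(x, …, x)) = 0, where m_{k1}(x,…,x) denotes m_{k1} applied to k1 copies of x. -/
/-- A (curved) A∞-algebra structure on a ℤ-graded `K`-vector space `V`:
graded pieces `grading p` (with `V` their direct sum), multilinear operations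
`m k` of degree `2 - k` satisfying the A∞-relations (with Koszul signs) on
homogeneous elements `x j ∈ grading (d j)`.  The inner sum over `i` encodes the
insertion of `m (k+1-k1) (x_i, …, x_{i+k2-1})` at (0-indexed) position `i`
among the `k1` arguments of `m k1`. -/
structure AInftyAlgebra (K V : Type) [Field K] [AddCommGroup V] [Module K V] where
  grading : ℤ → Submodule K V
  decomposition : DirectSum.Decomposition grading
  m : (k : ℕ) → MultilinearMap K (fun _ : Fin k => V) V
  m_degree : ∀ (k : ℕ) (d : ℕ → ℤ) (x : ℕ → V),
    (∀ j, x j ∈ grading (d j)) →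
    m k (fun j : Fin k => x j) ∈ grading (2 - (k : ℤ) + ∑ j ∈ Finset.range k, d j)
  ainfty_rel : ∀ (k : ℕ) (d : ℕ → ℤ) (x : ℕ → V),
    (∀ j, x j ∈ grading (d j)) →
    ∑ k1 ∈ Finset.range (k + 2), ∑ i ∈ Finset.range k1,
      ((-1 : K) ^ ((∑ j ∈ Finset.range i, d j) + (i : ℤ))) •
        m k1 (fun j : Fin k1 =>
          if (j : ℕ) < i then x j
          else if (j : ℕ) = i then
            m (k + 1 - k1) (fun l : Fin (k + 1 - k1) => x (i + (l : ℕ)))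
          else x ((j : ℕ) + (k + 1 - k1) - 1)) = 0

/-- An `n`-cyclic A∞-algebra: a finite-dimensional A∞-algebra together with a
bilinear pairing `Q` concentrated in total degree `n`, graded-antisymmetric and
cyclically invariant with respect to the operations `m k` (on homogeneous
elements `x 0, …, x k` of degrees `d 0, …, d k`). -/
structure CyclicAInftyAlgebra (K V : Type) [Field K] [AddCommGroup V] [Module K V]
    (n : ℤ) extends AInftyAlgebra K V where
  finiteDimensional : FiniteDimensional K V
  Q : V →ₗ[K] V →ₗ[K] K
  Q_graded : ∀ (p q : ℤ), p + q ≠ n → ∀ x ∈ grading p, ∀ y ∈ grading q, Q x y = 0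
  Q_antisymm : ∀ (p q : ℤ) (x y : V), x ∈ grading p → y ∈ grading q →
    Q x y = ((-1 : K) ^ ((p + 1) * (q + 1) + 1)) * Q y x
  Q_cyclic : ∀ (k : ℕ) (d : ℕ → ℤ) (x : ℕ → V), (∀ j, x j ∈ grading (d j)) →
    Q (m k (fun j : Fin k => x ((j : ℕ) + 1))) (x 0) =
      ((-1 : K) ^ ((d 0 + 1) * ((∑ j ∈ Finset.range k, d (j + 1)) + (k : ℤ)))) *
        Q (m k (fun j : Fin k => x (j : ℕ))) (x k)

/-- For an `n`-cyclic A∞-algebra over a field of characteristic zero, an element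
`x` of degree 1 and any `k ≥ 0`:
`Σ_{k1+k2=k+1} Q(m_{k1}(x,…,x), m_{k2}(x,…,x)) = 0`. -/
theorem cyclic_sum_pairing_eq_zero {K V : Type} [Field K] [CharZero K]
    [AddCommGroup V] [Module K V] (n : ℤ) (A : CyclicAInftyAlgebra K V n)
    (x : V) (hx : x ∈ A.grading 1) (k : ℕ) :
    ∑ k1 ∈ Finset.range (k + 2),
      A.Q (A.m k1 (fun _ => x)) (A.m (k + 1 - k1) (fun _ => x)) = 0 := by
  classical
  have hsign : ∀ S : ℤ, (-1 : K) ^ (2 * S) = 1 := by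
    intro S; rw [zpow_mul]; norm_num
  -- y k2 ∈ grading 2
  have hy : ∀ k2 : ℕ, A.m k2 (fun _ => x) ∈ A.grading 2 := by
    intro k2
    have := A.m_degree k2 (fun _ => 1) (fun _ => x) (fun _ => hx)
    simpa using this
  -- rotation step
  have step : ∀ (k1 k2 i : ℕ), i + 1 ≤ k1 →
      A.Q (A.m k1 (fun j : Fin k1 => if (j : ℕ) = i then A.m k2 (fun _ => x) else x)) x
        = A.Q (A.m k1 (fun j : Fin k1 => if (j : ℕ) = i + 1 then A.m k2 (fun _ => x) else x))
            (if k1 = i + 1 then A.m k2 (fun _ => x) else x) := by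
    intro k1 k2 i hi
    have hmem : ∀ j : ℕ,
        (if j = i + 1 then A.m k2 (fun _ => x) else x) ∈
          A.grading (if j = i + 1 then 2 else 1) := by
      intro j; by_cases h : j = i + 1 <;> simp [h, hy k2, hx]
    have hc := A.Q_cyclic k1 (fun j => if j = i + 1 then 2 else 1)
        (fun j => if j = i + 1 then A.m k2 (fun _ => x) else x) hmem
    simp only [Nat.succ_ne_zero, if_neg (show (0 : ℕ) ≠ i + 1 from by omega)] at hc
    have e1 : (fun j : Fin k1 => if ((j : ℕ) + 1) = i + 1 then A.m k2 (fun _ => x) else x)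
        = fun j : Fin k1 => if (j : ℕ) = i then A.m k2 (fun _ => x) else x := by
      funext j; by_cases h : (j : ℕ) = i
      · simp [h]
      · rw [if_neg (by omega), if_neg h]
    rw [e1] at hc
    rw [hc]
    have : ((1 : ℤ) + 1) * ((∑ j ∈ Finset.range k1, if j + 1 = i + 1 then (2 : ℤ) else 1) + (k1 : ℤ))
        = 2 * ((∑ j ∈ Finset.range k1, if j + 1 = i + 1 then (2 : ℤ) else 1) + (k1 : ℤ)) := by ring
    rw [this, hsign, one_mul]
  -- rotation chain
  have rot : ∀ (k2 k1 i : ℕ), i < k1 →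
      A.Q (A.m k1 (fun j : Fin k1 => if (j : ℕ) = i then A.m k2 (fun _ => x) else x)) x
        = A.Q (A.m k1 (fun _ => x)) (A.m k2 (fun _ => x)) := by
    intro k2 k1
    have aux : ∀ (jj i : ℕ), k1 = i + 1 + jj →
        A.Q (A.m k1 (fun j : Fin k1 => if (j : ℕ) = i then A.m k2 (fun _ => x) else x)) x
          = A.Q (A.m k1 (fun _ => x)) (A.m k2 (fun _ => x)) := by
      intro jj
      induction jj with
      | zero =>
        intro i h
        rw [step k1 k2 i (by omega), if_pos (by omega)]
        have harg : (fun j : Fin k1 => if (j : ℕ) = i + 1 then A.m k2 (fun _ => x) else x)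
            = fun _ : Fin k1 => x := by
          funext j; exact if_neg (by have := j.isLt; omega)
        rw [harg]
      | succ jj ih =>
        intro i h
        rw [step k1 k2 i (by omega), if_neg (by omega)]
        exact ih (i + 1) (by omega)
    intro i hi
    exact aux (k1 - 1 - i) i (by omega)
  -- the A∞-relation paired with x
  have hrel := A.ainfty_rel k (fun _ => 1) (fun _ => x) (fun _ => hx)
  have h2 : ∑ k1 ∈ Finset.range (k + 2), ∑ i ∈ Finset.range k1,
      A.Q (A.m k1 (fun j : Fin k1 =>
        if (j : ℕ) = i then A.m (k + 1 - k1) (fun _ => x) else x)) x = 0 := by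
    have h0 := congrArg (fun v => A.Q v x) hrel
    simp only [map_sum, LinearMap.sum_apply, map_smul, LinearMap.smul_apply, smul_eq_mul,
      map_zero, LinearMap.zero_apply] at h0
    rw [← h0]
    refine Finset.sum_congr rfl (fun k1 _ => Finset.sum_congr rfl (fun i _ => ?_))
    have hc : ((∑ _j ∈ Finset.range i, (1 : ℤ)) + (i : ℤ)) = 2 * (i : ℤ) := by
      simp; ring
    rw [hc, hsign, one_mul]
    have harg : (fun j : Fin k1 => if (j : ℕ) = i then A.m (k + 1 - k1) (fun _ => x) else x)
        = fun j : Fin k1 =>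
            if (j : ℕ) < i then x
            else if (j : ℕ) = i then A.m (k + 1 - k1) (fun _ : Fin (k + 1 - k1) => x) else x := by
      funext j
      by_cases h1 : (j : ℕ) < i
      · rw [if_pos h1, if_neg (by omega)]
      · by_cases h2 : (j : ℕ) = i
        · simp [h1, h2]
        · rw [if_neg h1, if_neg h2]
    rw [harg]
  -- turn inner sums into k1 • Q(y k1, y k2)
  have T : ∑ k1 ∈ Finset.range (k + 2),
      (k1 : K) * A.Q (A.m k1 (fun _ => x)) (A.m (k + 1 - k1) (fun _ => x)) = 0 := by
    rw [← h2]
    refine Finset.sum_congr rfl (fun k1 hk1 => ?_)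
    rw [Finset.sum_congr rfl (fun i hi => rot (k + 1 - k1) k1 i (Finset.mem_range.mp hi))]
    rw [Finset.sum_const, nsmul_eq_mul, Finset.card_range]
  -- symmetry of Q on degree-2 elements
  have hsymm : ∀ a b : ℕ, A.Q (A.m a (fun _ => x)) (A.m b (fun _ => x))
      = A.Q (A.m b (fun _ => x)) (A.m a (fun _ => x)) := by
    intro a b
    have := A.Q_antisymm 2 2 (A.m a (fun _ => x)) (A.m b (fun _ => x)) (hy a) (hy b)
    rw [this]; norm_num
  -- reflected sum
  have T' : ∑ k1 ∈ Finset.range (k + 2),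
      ((k + 1 - k1 : ℕ) : K) * A.Q (A.m k1 (fun _ => x)) (A.m (k + 1 - k1) (fun _ => x)) = 0 := by
    have hrefl := Finset.sum_range_reflect
      (fun j => (j : K) * A.Q (A.m j (fun _ => x)) (A.m (k + 1 - j) (fun _ => x))) (k + 2)
    rw [← T, ← hrefl]
    refine Finset.sum_congr rfl (fun j hj => ?_)
    have hj' : j ≤ k + 1 := by have := Finset.mem_range.mp hj; omega
    have e1 : k + 2 - 1 - j = k + 1 - j := by omega
    have e2 : k + 1 - (k + 1 - j) = j := by omega
    rw [e1, e2, hsymm j (k + 1 - j)]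
  have hsum : ((k + 1 : ℕ) : K) * (∑ k1 ∈ Finset.range (k + 2),
      A.Q (A.m k1 (fun _ => x)) (A.m (k + 1 - k1) (fun _ => x))) = 0 := by
    rw [Finset.mul_sum]
    have hterm : ∀ j ∈ Finset.range (k + 2),
        ((k + 1 : ℕ) : K) * A.Q (A.m j (fun _ => x)) (A.m (k + 1 - j) (fun _ => x))
          = (j : K) * A.Q (A.m j (fun _ => x)) (A.m (k + 1 - j) (fun _ => x))
            + ((k + 1 - j : ℕ) : K) * A.Q (A.m j (fun _ => x)) (A.m (k + 1 - j) (fun _ => x)) := by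
      intro j hj
      have hj' : j ≤ k + 1 := by have := Finset.mem_range.mp hj; omega
      have e : j + (k + 1 - j) = k + 1 := by omega
      have hcast : ((k + 1 : ℕ) : K) = (j : K) + ((k + 1 - j : ℕ) : K) := by
        have h' := Nat.cast_add (R := K) j (k + 1 - j)
        rw [e] at h'
        exact h'
      rw [hcast]; ring
    rw [Finset.sum_congr rfl hterm, Finset.sum_add_distrib, T, T', add_zero]
  have hk : ((k + 1 : ℕ) : K) ≠ 0 := Nat.cast_ne_zero.mpr (by omega)
  exact (mul_eq_zero.mp hsum).resolve_left hk
end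

section
/- Let K be a field of characteristic zero and let (A, m_k, Q) be an n-cyclic A∞-algebra over K of finite type, i.e. m_k = 0 for all k > N. Then the Kuranishi map κ : A^1 → A^2, κ(x) = Σ_{k=0}^{N} m_k(x, …, x), satisfies Q(κ(x), κ(x)) = Q(m_0(1), m_0(1)) for every x ∈ A^1; in particular the quantity Q(κ(x), κ(x)) is independent of x. -/
/-- The Kuranishi map of an A∞-algebra of finite type (`m k = 0` for `k > N`):
`κ(x) = ∑_{k=0}^{N} m_k(x, …, x)`. -/
def kuranishi {K V : Type} [Field K] [AddCommGroup V] [Module K V]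
    (A : AInftyAlgebra K V) (N : ℕ) (x : V) : V :=
  ∑ k ∈ Finset.range (N + 1), A.m k (fun _ => x)

/-!
Write `c a b = Q(m_a(x,…,x), m_b(x,…,x))`, so that `Q(κ(x), κ(x))` is the sum of the
antidiagonal sums `T_s = ∑_{a+b=s} c a b`. Pairing the A∞-relation at `(x, …, x)` with `x`
and using cyclicity to move the inner operation to the second slot of `Q` gives
`∑_{a+b=s} a • c a b = 0`; since `Q` is symmetric on degree 2, also `∑_{a+b=s} b • c a b = 0`,
hence `s • T_s = 0`. In characteristic zero only `T_0 = Q(m_0, m_0)` survives.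
-/

open Finset

theorem Finset.Nat.nsmul_sum_antidiagonal_eq_two_nsmul_of_symm {M : Type*} [AddCommMonoid M]
    (f : ℕ → ℕ → M) (hf : ∀ a b, f a b = f b a) (s : ℕ) :
    s • ∑ p ∈ antidiagonal s, f p.1 p.2 = 2 • ∑ p ∈ antidiagonal s, p.1 • f p.1 p.2 := by
  have hswap : ∑ p ∈ antidiagonal s, p.2 • f p.1 p.2 = ∑ p ∈ antidiagonal s, p.1 • f p.1 p.2 := by
    rw [← Finset.Nat.sum_antidiagonal_swap]
    exact sum_congr rfl fun p _ => by rw [Prod.fst_swap, Prod.snd_swap, hf]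
  calc s • ∑ p ∈ antidiagonal s, f p.1 p.2
      = ∑ p ∈ antidiagonal s, (p.1 + p.2) • f p.1 p.2 := by
        rw [smul_sum]
        exact sum_congr rfl fun p hp => by rw [mem_antidiagonal.mp hp]
    _ = 2 • ∑ p ∈ antidiagonal s, p.1 • f p.1 p.2 := by
        simp only [add_nsmul, sum_add_distrib, hswap, two_nsmul]

theorem Finset.sum_range_sum_range_eq_sum_range_sum_antidiagonal {M : Type*} [AddCommMonoid M]
    {f : ℕ → ℕ → M} {N : ℕ} (hf : ∀ a b, N < a ∨ N < b → f a b = 0) :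
    ∑ a ∈ range (N + 1), ∑ b ∈ range (N + 1), f a b =
      ∑ s ∈ range (2 * N + 1), ∑ p ∈ antidiagonal s, f p.1 p.2 := by
  simp only [Finset.Nat.sum_antidiagonal_eq_sum_range_succ f, Nat.succ_eq_add_one,
    sum_range_diag_flip]
  have hN : N + 1 ≤ 2 * N + 1 := by omega
  rw [← sum_subset (range_subset_range.2 hN) fun a _ ha =>
    sum_eq_zero fun b _ => hf a b (.inl (by simpa using ha))]
  refine sum_congr rfl fun a ha => sum_subset (range_subset_range.2 ?_) fun b _ hb =>
    hf a b (.inr (by simpa using hb))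
  have := mem_range.mp ha
  omega

namespace AInftyAlgebra

variable {K V : Type} [Field K] [AddCommGroup V] [Module K V] (A : AInftyAlgebra K V)

theorem m_const_mem_grading_two {x : V} (hx : x ∈ A.grading 1) (k : ℕ) :
    A.m k (fun _ => x) ∈ A.grading 2 := by
  simpa using A.m_degree k (fun _ => 1) (fun _ => x) (fun _ => hx)

/-- At a constant input of degree 1 all Koszul signs of the A∞-relation are `+1`. -/
theorem ainfty_rel_const {x : V} (hx : x ∈ A.grading 1) (k : ℕ) :
    ∑ k1 ∈ range (k + 2), ∑ i ∈ range k1,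
      A.m k1 (fun j : Fin k1 => if (j : ℕ) = i then A.m (k + 1 - k1) (fun _ => x) else x) = 0 := by
  have hrel := A.ainfty_rel k (fun _ => 1) (fun _ => x) (fun _ => hx)
  have hsign : ∀ i : ℕ, (-1 : K) ^ ((i : ℤ) + i) = 1 := fun i => Even.neg_one_zpow ⟨i, rfl⟩
  simp only [sum_const, card_range, nsmul_eq_mul, mul_one, hsign, one_smul] at hrel
  rw [← hrel]
  refine sum_congr rfl fun k1 _ => sum_congr rfl fun i _ => congrArg _ (funext fun j => ?_)
  by_cases hji : (j : ℕ) < i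
  · rw [if_pos hji, if_neg hji.ne]
  · rw [if_neg hji]

end AInftyAlgebra

namespace CyclicAInftyAlgebra

variable {K V : Type} [Field K] [AddCommGroup V] [Module K V] {n : ℤ}
  (A : CyclicAInftyAlgebra K V n)

theorem Q_comm_of_even {p q : ℤ} (hp : Even p) (hq : Even q) {y z : V}
    (hy : y ∈ A.grading p) (hz : z ∈ A.grading q) : A.Q y z = A.Q z y := by
  obtain ⟨a, rfl⟩ := hp
  obtain ⟨b, rfl⟩ := hq
  rw [A.Q_antisymm _ _ y z hy hz, Even.neg_one_zpow ⟨2 * a * b + a + b + 1, by ring⟩, one_mul]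

/-- Cyclicity moves `w` from slot `i` to slot `i + 1`, and out of the last slot into the
second argument of `Q`; the odd degree of `x` makes the sign `+1`. -/
theorem Q_m_update_rotate {q p : ℤ} (hq : Odd q) {x w : V} (hx : x ∈ A.grading q)
    (hw : w ∈ A.grading p) (k i : ℕ) :
    A.Q (A.m k fun j : Fin k => if (j : ℕ) = i then w else x) x =
      A.Q (A.m k fun j : Fin k => if (j : ℕ) = i + 1 then w else x)
        (if k = i + 1 then w else x) := by
  have hcyc := A.Q_cyclic k (fun s => if s = i + 1 then p else q)
    (fun s => if s = i + 1 then w else x) (fun s => by split_ifs <;> assumption)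
  obtain ⟨r, rfl⟩ := hq
  simp only [Nat.add_right_cancel_iff, Nat.zero_ne_add_one, if_false] at hcyc
  rw [hcyc, Even.neg_one_zpow (Even.mul_right ⟨r + 1, by ring⟩ _), one_mul]

theorem Q_m_update_eq_Q_m_const {q p : ℤ} (hq : Odd q) {x w : V} (hx : x ∈ A.grading q)
    (hw : w ∈ A.grading p) {k i : ℕ} (hik : i < k) :
    A.Q (A.m k fun j : Fin k => if (j : ℕ) = i then w else x) x =
      A.Q (A.m k fun _ => x) w := by
  obtain ⟨t, rfl⟩ : ∃ t, k = i + 1 + t := ⟨k - (i + 1), by omega⟩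
  induction t generalizing i with
  | zero =>
    rw [A.Q_m_update_rotate hq hx hw, if_pos rfl]
    exact congrArg (A.Q · w) (congrArg _ (funext fun j => if_neg (by have := j.isLt; omega)))
  | succ t ih =>
    rw [A.Q_m_update_rotate hq hx hw, if_neg (by omega),
      show i + 1 + (t + 1) = i + 1 + 1 + t by omega]
    exact ih (by omega)

theorem sum_antidiagonal_nsmul_Q_m_const_eq_zero {x : V} (hx : x ∈ A.grading 1) (k : ℕ) :
    ∑ p ∈ antidiagonal (k + 1),
      p.1 • A.Q (A.m p.1 fun _ => x) (A.m p.2 fun _ => x) = 0 := by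
  have hrel := congrArg (A.Q.flip x) (A.ainfty_rel_const hx k)
  simp only [map_sum, map_zero, LinearMap.flip_apply] at hrel
  rw [Finset.Nat.sum_antidiagonal_eq_sum_range_succ
    (fun a b => a • A.Q (A.m a fun _ => x) (A.m b fun _ => x)), ← hrel]
  refine sum_congr rfl fun k1 _ => ?_
  rw [sum_congr rfl fun i hi => A.Q_m_update_eq_Q_m_const odd_one hx
    (A.m_const_mem_grading_two hx _) (mem_range.mp hi), sum_const, card_range]

theorem sum_antidiagonal_Q_m_const_eq_zero [CharZero K] {x : V} (hx : x ∈ A.grading 1)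
    {s : ℕ} (hs : s ≠ 0) :
    ∑ p ∈ antidiagonal s, A.Q (A.m p.1 fun _ => x) (A.m p.2 fun _ => x) = 0 := by
  have hsymm : ∀ a b, A.Q (A.m a fun _ => x) (A.m b fun _ => x) =
      A.Q (A.m b fun _ => x) (A.m a fun _ => x) := fun a b =>
    A.Q_comm_of_even even_two even_two (A.m_const_mem_grading_two hx a)
      (A.m_const_mem_grading_two hx b)
  obtain ⟨k, rfl⟩ := Nat.exists_eq_add_one_of_ne_zero hs
  have h := Finset.Nat.nsmul_sum_antidiagonal_eq_two_nsmul_of_symm _ hsymm (k + 1)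
  rw [A.sum_antidiagonal_nsmul_Q_m_const_eq_zero hx k, smul_zero] at h
  exact (smul_eq_zero.mp h).resolve_left hs

end CyclicAInftyAlgebra

/-- For an `n`-cyclic A∞-algebra of finite type over a field of characteristic
zero, the Kuranishi map `κ(x) = Σ_{k=0}^N m_k(x,…,x)` satisfies
`Q(κ(x), κ(x)) = Q(m_0(1), m_0(1))` for every `x` of degree 1; in particular
`Q(κ(x),κ(x))` is independent of `x`. -/
theorem Q_kuranishi_kuranishi_const {K V : Type} [Field K] [CharZero K]
    [AddCommGroup V] [Module K V] (n : ℤ) (A : CyclicAInftyAlgebra K V n)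
    (N : ℕ) (hN : ∀ k, N < k → A.m k = 0)
    (x : V) (hx : x ∈ A.grading 1) :
    A.Q (kuranishi A.toAInftyAlgebra N x) (kuranishi A.toAInftyAlgebra N x) =
      A.Q (A.m 0 ![]) (A.m 0 ![]) := by
  have hvanish : ∀ a b, N < a ∨ N < b →
      A.Q (A.m a fun _ => x) (A.m b fun _ => x) = 0 := by
    rintro a b (ha | hb)
    · simp [hN a ha]
    · simp [hN b hb]
  have hexpand : A.Q (kuranishi A.toAInftyAlgebra N x) (kuranishi A.toAInftyAlgebra N x) =
      ∑ a ∈ range (N + 1), ∑ b ∈ range (N + 1), A.Q (A.m a fun _ => x) (A.m b fun _ => x) := by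
    simp only [kuranishi, map_sum, LinearMap.sum_apply]
    exact sum_comm
  rw [hexpand, sum_range_sum_range_eq_sum_range_sum_antidiagonal hvanish,
    sum_eq_single 0 (fun s _ hs => A.sum_antidiagonal_Q_m_const_eq_zero hx hs)
      (fun h => absurd (mem_range.mpr (Nat.succ_pos _)) h)]
  simp only [Finset.Nat.antidiagonal_zero, sum_singleton]
  congr <;> exact Subsingleton.elim _ _
end

section
/- Let (A, m_k, Q) be an n-cyclic A∞-algebra over a field K (of arbitrary characteristic). Then for every x ∈ A^1 and every k ≥ 0, the weighted sum Σ_{k1+k2=k+1, k1,k2 ≥ 0} k1 · Q(m_{k1}(x, …, x), m_{k2}(x, …, x)) = 0, where m_{k1}(x,…,x) denotes m_{k1} applied to k1 copies of x. -/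
lemma neg_one_zpow_two_mul {K : Type} [Field K] (m : ℤ) : (-1 : K) ^ (2 * m) = 1 := by
  rw [zpow_mul]
  norm_num

/-- One cyclic rotation: moves the degree-2 element `yv` one slot to the right. -/
lemma CyclicAInftyAlgebra.rot {K V : Type} [Field K] [AddCommGroup V] [Module K V] {n : ℤ}
    (A : CyclicAInftyAlgebra K V n) (x : V) (hx : x ∈ A.grading 1)
    (yv : V) (hyv : yv ∈ A.grading 2) (k1 p : ℕ) :
    A.Q (A.m k1 (fun j : Fin k1 => if (j : ℕ) = p then yv else x)) x
      = A.Q (A.m k1 (fun j : Fin k1 => if (j : ℕ) = p + 1 then yv else x))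
          (if (k1 : ℕ) = p + 1 then yv else x) := by
  have hmem : ∀ j : ℕ, (if j = p + 1 then yv else x) ∈
      A.grading (if j = p + 1 then (2 : ℤ) else 1) := by
    intro j; split <;> assumption
  have hc := A.Q_cyclic k1 (fun j => if j = p + 1 then (2 : ℤ) else 1)
      (fun j => if j = p + 1 then yv else x) hmem
  simp only [Nat.add_left_inj] at hc
  rw [if_neg (Nat.succ_ne_zero p).symm, if_neg (Nat.succ_ne_zero p).symm] at hc
  rw [hc]
  have hs : ∀ M : ℤ, ((-1 : K) ^ (((1 : ℤ) + 1) * M)) = 1 := by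
    intro M
    rw [show ((1 : ℤ) + 1) = 2 by norm_num, neg_one_zpow_two_mul]
  rw [hs, one_mul]

/-- Iterated rotation: bring `yv` all the way around to the pairing slot. -/
lemma CyclicAInftyAlgebra.rot_all {K V : Type} [Field K] [AddCommGroup V] [Module K V] {n : ℤ}
    (A : CyclicAInftyAlgebra K V n) (x : V) (hx : x ∈ A.grading 1)
    (yv : V) (hyv : yv ∈ A.grading 2) (k1 : ℕ) :
    ∀ i, i < k1 →
    A.Q (A.m k1 (fun j : Fin k1 => if (j : ℕ) = i then yv else x)) x
      = A.Q (A.m k1 (fun _ : Fin k1 => x)) yv := by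
  suffices h : ∀ d i, k1 - i = d → i < k1 →
      A.Q (A.m k1 (fun j : Fin k1 => if (j : ℕ) = i then yv else x)) x
        = A.Q (A.m k1 (fun _ : Fin k1 => x)) yv by
    intro i hi; exact h _ i rfl hi
  intro d
  induction d with
  | zero => intro i hd hi; omega
  | succ d ih =>
    intro i hd hi
    rw [A.rot x hx yv hyv k1 i]
    rcases Nat.lt_or_ge (i + 1) k1 with h | h
    · rw [if_neg (by omega)]
      exact ih (i + 1) (by omega) h
    · have hk : k1 = i + 1 := by omega
      rw [if_pos hk]
      have he : (fun j : Fin k1 => if (j : ℕ) = i + 1 then yv else x)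
          = fun _ : Fin k1 => x := by
        funext j
        have hj := j.isLt
        rw [if_neg (by omega)]
      rw [he]

/-- For an `n`-cyclic A∞-algebra over a field of arbitrary characteristic,
`x` of degree 1 and any `k ≥ 0`, the weighted sum
`Σ_{k1+k2=k+1} k1 · Q(m_{k1}(x,…,x), m_{k2}(x,…,x)) = 0`. -/
theorem cyclic_weighted_sum_pairing_eq_zero {K V : Type} [Field K]
    [AddCommGroup V] [Module K V] (n : ℤ) (A : CyclicAInftyAlgebra K V n)
    (x : V) (hx : x ∈ A.grading 1) (k : ℕ) :
    ∑ k1 ∈ Finset.range (k + 2),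
      (k1 : K) * A.Q (A.m k1 (fun _ => x)) (A.m (k + 1 - k1) (fun _ => x)) = 0 := by
  -- m_{k2}(x,…,x) has degree 2
  have hy : ∀ k2 : ℕ, A.m k2 (fun _ : Fin k2 => x) ∈ A.grading 2 := by
    intro k2
    have h := A.m_degree k2 (fun _ => 1) (fun _ => x) (fun _ => hx)
    have e : (2 - (k2 : ℤ) + ∑ _j ∈ Finset.range k2, (1 : ℤ)) = 2 := by
      simp
    rwa [e] at h
  -- the A∞ relation with all inputs x, paired with x
  have hrel := A.ainfty_rel k (fun _ => 1) (fun _ => x) (fun _ => hx)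
  have h0 := congrArg (A.Q.flip x) hrel
  have hsign : ∀ i : ℕ,
      ((-1 : K) ^ ((∑ _j ∈ Finset.range i, (1 : ℤ)) + (i : ℤ))) = 1 := by
    intro i
    have : ((∑ _j ∈ Finset.range i, (1 : ℤ)) + (i : ℤ)) = 2 * i := by
      simp; ring
    rw [this, neg_one_zpow_two_mul]
  simp only [map_sum, map_smul, map_zero, LinearMap.flip_apply, hsign, one_smul] at h0
  rw [← h0]
  refine Finset.sum_congr rfl fun k1 _ => ?_
  have harg : ∀ i : ℕ,
      (fun j : Fin k1 =>
        if (j : ℕ) < i then x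
        else if (j : ℕ) = i then A.m (k + 1 - k1) (fun _ : Fin (k + 1 - k1) => x)
        else x)
      = fun j : Fin k1 =>
        if (j : ℕ) = i then A.m (k + 1 - k1) (fun _ : Fin (k + 1 - k1) => x) else x := by
    intro i
    funext j
    by_cases h1 : (j : ℕ) < i
    · simp [h1, Nat.ne_of_lt h1]
    · simp [h1]
  calc (k1 : K) * A.Q (A.m k1 (fun _ => x)) (A.m (k + 1 - k1) (fun _ => x))
      = ∑ _i ∈ Finset.range k1,
          A.Q (A.m k1 (fun _ => x)) (A.m (k + 1 - k1) (fun _ => x)) := by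
        rw [Finset.sum_const, Finset.card_range, nsmul_eq_mul]
    _ = _ := by
        refine Finset.sum_congr rfl fun i hi => ?_
        rw [harg i]
        exact (A.rot_all x hx _ (hy (k + 1 - k1)) k1 i (Finset.mem_range.mp hi)).symm
end

section
/- Let (A, m_k, Q) be a 4-cyclic A∞-algebra over ℝ of finite type (m_k = 0 for all k > N), and suppose the pairing Q restricted to A^2 is anisotropic, i.e. for v ∈ A^2, Q(v, v) = 0 implies v = 0 (in particular this holds when Q is positive or negative definite on A^2). If there exists b ∈ A^1 with κ(b) = 0, then κ(x) = 0 for every x ∈ A^1; that is, the set of Maurer–Cartan elements {b ∈ A^1 : κ(b) = 0} is either empty or equal to all of A^1. -/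
section AuxKuranishi

lemma aux_neg_one_zpow (i : ℤ) : (-1 : ℝ) ^ (i + i) = 1 := by
  rw [zpow_add₀ (by norm_num : (-1:ℝ) ≠ 0), ← mul_zpow]
  norm_num

variable {V : Type} [AddCommGroup V] [Module ℝ V]

lemma aux_mem (A : CyclicAInftyAlgebra ℝ V 4) {x : V} (hx : x ∈ A.grading 1) (k : ℕ) :
    A.m k (fun _ => x) ∈ A.grading 2 := by
  have h := A.m_degree k (fun _ => 1) (fun _ => x) (fun _ => hx)
  simpa using h

lemma aux_cyc_step (A : CyclicAInftyAlgebra ℝ V 4) {x z : V}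
    (hx : x ∈ A.grading 1) (hz : z ∈ A.grading 2) (k i : ℕ) (_hik : i < k) :
    A.Q (A.m k (fun j : Fin k => if (j : ℕ) = i then z else x)) x =
      A.Q (A.m k (fun j : Fin k => if (j : ℕ) = i + 1 then z else x))
        (if k = i + 1 then z else x) := by
  classical
  set w : ℕ → V := fun j => if j = i + 1 then z else x with hw
  set dd : ℕ → ℤ := fun j => if j = i + 1 then 2 else 1 with hd
  have hmem : ∀ j, w j ∈ A.grading (dd j) := by
    intro j
    by_cases h : j = i + 1 <;> simp [hw, hd, h, hx, hz]
  have hc := A.Q_cyclic k dd w hmem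
  have h0 : w 0 = x := by simp [hw]
  have harg1 : (fun j : Fin k => w ((j : ℕ) + 1)) =
      (fun j : Fin k => if (j : ℕ) = i then z else x) := by
    funext j
    simp [hw]
  have hwk : w k = if k = i + 1 then z else x := rfl
  rw [harg1, h0, hwk] at hc
  have hd0 : dd 0 = 1 := by simp [hd]
  have hsgn : ((-1 : ℝ) ^ ((dd 0 + 1) * ((∑ j ∈ Finset.range k, dd (j + 1)) + (k : ℤ)))) = 1 := by
    rw [hd0]
    rw [show (1 + 1 : ℤ) * ((∑ j ∈ Finset.range k, dd (j + 1)) + (k : ℤ)) =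
      ((∑ j ∈ Finset.range k, dd (j + 1)) + (k : ℤ)) +
        ((∑ j ∈ Finset.range k, dd (j + 1)) + (k : ℤ)) from by ring]
    exact aux_neg_one_zpow _
  rw [hsgn, one_mul] at hc
  exact hc

lemma aux_cyc (A : CyclicAInftyAlgebra ℝ V 4) {x z : V}
    (hx : x ∈ A.grading 1) (hz : z ∈ A.grading 2) (k : ℕ) :
    ∀ i, i < k →
    A.Q (A.m k (fun j : Fin k => if (j : ℕ) = i then z else x)) x =
      A.Q (A.m k (fun _ : Fin k => x)) z := by
  have key : ∀ t : ℕ, ∀ i, i < k → k - 1 - i = t →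
      A.Q (A.m k (fun j : Fin k => if (j : ℕ) = i then z else x)) x =
        A.Q (A.m k (fun _ : Fin k => x)) z := by
    intro t
    induction t with
    | zero =>
      intro i hik ht
      have hi : k = i + 1 := by omega
      have h := aux_cyc_step A hx hz k i hik
      rw [if_pos hi] at h
      rw [h]
      have e : (fun j : Fin k => if (j : ℕ) = i + 1 then z else x) = (fun _ : Fin k => x) := by
        funext j
        have hj := j.isLt
        rw [if_neg (by omega)]
      rw [e]
    | succ t ih =>
      intro i hik ht
      have h := aux_cyc_step A hx hz k i hik
      have hne : k ≠ i + 1 := by omega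
      rw [if_neg hne] at h
      rw [h]
      exact ih (i + 1) (by omega) (by omega)
  intro i hik
  exact key (k - 1 - i) i hik rfl

lemma aux_rel (A : CyclicAInftyAlgebra ℝ V 4) {x : V} (hx : x ∈ A.grading 1) (k : ℕ) :
    ∑ k1 ∈ Finset.range (k + 2),
      (k1 : ℝ) * A.Q (A.m k1 (fun _ : Fin k1 => x))
        (A.m (k + 1 - k1) (fun _ : Fin (k + 1 - k1) => x)) = 0 := by
  classical
  have h := A.ainfty_rel k (fun _ => 1) (fun _ => x) (fun _ => hx)
  simp only [Finset.sum_const, Finset.card_range, smul_eq_mul, nsmul_eq_mul, mul_one] at h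
  have hsgn : ∀ i : ℕ, ((-1 : ℝ) ^ ((i : ℤ) + (i : ℤ))) = 1 := fun i => aux_neg_one_zpow i
  simp only [hsgn, one_smul] at h
  have h2 : ∑ k1 ∈ Finset.range (k + 2), ∑ i ∈ Finset.range k1,
      A.m k1 (fun j : Fin k1 =>
        if (j : ℕ) = i then A.m (k + 1 - k1) (fun _ : Fin (k + 1 - k1) => x) else x) = 0 := by
    rw [← h]
    refine Finset.sum_congr rfl fun k1 _ => Finset.sum_congr rfl fun i _ => ?_
    congr 1
    funext j
    split_ifs <;> first | rfl | omega
  have h3 : A.Q (∑ k1 ∈ Finset.range (k + 2), ∑ i ∈ Finset.range k1,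
      A.m k1 (fun j : Fin k1 =>
        if (j : ℕ) = i then A.m (k + 1 - k1) (fun _ : Fin (k + 1 - k1) => x) else x)) x = 0 := by
    rw [h2]
    simp
  simp only [map_sum, LinearMap.sum_apply] at h3
  rw [← h3]
  refine Finset.sum_congr rfl fun k1 _ => ?_
  rw [Finset.sum_congr rfl fun i hi =>
    aux_cyc A hx (aux_mem A hx (k + 1 - k1)) k1 i (Finset.mem_range.mp hi)]
  rw [Finset.sum_const, Finset.card_range, nsmul_eq_mul]

lemma aux_symm (A : CyclicAInftyAlgebra ℝ V 4) {u v : V}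
    (hu : u ∈ A.grading 2) (hv : v ∈ A.grading 2) : A.Q u v = A.Q v u := by
  have h := A.Q_antisymm 2 2 u v hu hv
  norm_num at h
  exact h

lemma aux_anti (A : CyclicAInftyAlgebra ℝ V 4) {x : V} (hx : x ∈ A.grading 1) (s : ℕ) :
    ∑ a ∈ Finset.range (s + 2),
      A.Q (A.m a (fun _ : Fin a => x)) (A.m (s + 1 - a) (fun _ : Fin (s + 1 - a) => x)) = 0 := by
  set q : ℕ → ℕ → ℝ :=
    fun a b => A.Q (A.m a (fun _ : Fin a => x)) (A.m b (fun _ : Fin b => x)) with hq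
  have hsym : ∀ a b, q a b = q b a :=
    fun a b => aux_symm A (aux_mem A hx a) (aux_mem A hx b)
  have h1 : ∑ a ∈ Finset.range (s + 2), (a : ℝ) * q a (s + 1 - a) = 0 := aux_rel A hx s
  have h2 : ∑ a ∈ Finset.range (s + 2), ((s + 1 - a : ℕ) : ℝ) * q a (s + 1 - a) = 0 := by
    have hrefl := Finset.sum_range_reflect
      (fun a => (a : ℝ) * q a (s + 1 - a)) (s + 2)
    rw [← hrefl] at h1
    refine Eq.trans (Finset.sum_congr rfl fun a ha => ?_) h1
    have ha' : a ≤ s + 1 := by have := Finset.mem_range.mp ha; omega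
    rw [show s + 2 - 1 - a = s + 1 - a from by omega,
      show s + 1 - (s + 1 - a) = a from by omega, hsym a]
  have h3 : ∑ a ∈ Finset.range (s + 2), ((s : ℝ) + 1) * q a (s + 1 - a) = 0 := by
    have e : ∀ a ∈ Finset.range (s + 2), ((s : ℝ) + 1) * q a (s + 1 - a) =
        (a : ℝ) * q a (s + 1 - a) + ((s + 1 - a : ℕ) : ℝ) * q a (s + 1 - a) := by
      intro a ha
      have ha' : a ≤ s + 1 := by have := Finset.mem_range.mp ha; omega
      have hc : ((s + 1 - a : ℕ) : ℝ) = (s : ℝ) + 1 - (a : ℝ) := by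
        rw [Nat.cast_sub ha']
        push_cast
        ring
      rw [hc]
      ring
    rw [Finset.sum_congr rfl e, Finset.sum_add_distrib, h1, h2, add_zero]
  rw [← Finset.mul_sum] at h3
  have hne : ((s : ℝ) + 1) ≠ 0 := by positivity
  exact (mul_eq_zero.mp h3).resolve_left hne

lemma aux_key (A : CyclicAInftyAlgebra ℝ V 4) (N : ℕ) (hN : ∀ k, N < k → A.m k = 0)
    {x : V} (hx : x ∈ A.grading 1) :
    A.Q (kuranishi A.toAInftyAlgebra N x) (kuranishi A.toAInftyAlgebra N x) =
      A.Q (A.m 0 (fun _ : Fin 0 => x)) (A.m 0 (fun _ : Fin 0 => x)) := by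
  classical
  set q : ℕ → ℕ → ℝ :=
    fun a b => A.Q (A.m a (fun _ : Fin a => x)) (A.m b (fun _ : Fin b => x)) with hq
  have hvan : ∀ a b : ℕ, N < a ∨ N < b → q a b = 0 := by
    intro a b hab
    rcases hab with h | h
    · simp [hq, hN a h]
    · simp [hq, hN b h]
  have hexp : A.Q (kuranishi A.toAInftyAlgebra N x) (kuranishi A.toAInftyAlgebra N x) =
      ∑ a ∈ Finset.range (N + 1), ∑ b ∈ Finset.range (N + 1), q a b := by
    unfold kuranishi
    simp only [map_sum, LinearMap.sum_apply]
    rw [Finset.sum_comm]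
  set n : ℕ := 2 * N + 2 with hn
  have step1 : ∑ a ∈ Finset.range (N + 1), ∑ b ∈ Finset.range (N + 1), q a b =
      ∑ a ∈ Finset.range n, ∑ b ∈ Finset.range (N + 1), q a b := by
    refine Finset.sum_subset (Finset.range_subset_range.mpr (by omega)) ?_
    intro a _ ha
    have : N < a := by
      have := Finset.mem_range.not.mp ha
      omega
    exact Finset.sum_eq_zero fun b _ => hvan a b (Or.inl this)
  have step2 : ∑ a ∈ Finset.range n, ∑ b ∈ Finset.range (N + 1), q a b =
      ∑ a ∈ Finset.range n, ∑ b ∈ Finset.range (n - a), q a b := by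
    refine Finset.sum_congr rfl fun a ha => ?_
    by_cases hA : N < a
    · rw [Finset.sum_eq_zero fun b _ => hvan a b (Or.inl hA),
        Finset.sum_eq_zero fun b _ => hvan a b (Or.inl hA)]
    · refine Finset.sum_subset (Finset.range_subset_range.mpr (by omega)) ?_
      intro b _ hb
      have : N < b := by
        have := Finset.mem_range.not.mp hb
        omega
      exact hvan a b (Or.inr this)
  have step3 : ∑ m ∈ Finset.range n, ∑ k ∈ Finset.range (m + 1), q k (m - k) =
      ∑ a ∈ Finset.range n, ∑ b ∈ Finset.range (n - a), q a b :=
    Finset.sum_range_diag_flip n q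
  have step4 : ∑ m ∈ Finset.range n, ∑ k ∈ Finset.range (m + 1), q k (m - k) = q 0 0 := by
    rw [Finset.sum_eq_single_of_mem 0 (Finset.mem_range.mpr (by omega))]
    · simp
    · intro m _ hm
      obtain ⟨s, rfl⟩ := Nat.exists_eq_succ_of_ne_zero hm
      exact aux_anti A hx s
  rw [hexp, step1, step2, ← step3, step4]

end AuxKuranishi

/-- For a `4`-cyclic A∞-algebra over `ℝ` of finite type whose pairing is
anisotropic on the degree-2 part, the set of Maurer–Cartan elements in degree 1
is either empty or all of `A^1`: if some `b ∈ A^1` satisfies `κ(b) = 0` then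
`κ(x) = 0` for every `x ∈ A^1`. -/
theorem kuranishi_eq_zero_of_exists_MC {V : Type} [AddCommGroup V] [Module ℝ V]
    (A : CyclicAInftyAlgebra ℝ V 4) (N : ℕ) (hN : ∀ k, N < k → A.m k = 0)
    (haniso : ∀ v ∈ A.grading 2, A.Q v v = 0 → v = 0)
    (hex : ∃ b ∈ A.grading 1, kuranishi A.toAInftyAlgebra N b = 0) :
    ∀ x ∈ A.grading 1, kuranishi A.toAInftyAlgebra N x = 0 := by
  obtain ⟨b, hb, hbk⟩ := hex
  have hb0 : A.Q (A.m 0 (fun _ : Fin 0 => b)) (A.m 0 (fun _ : Fin 0 => b)) = 0 := by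
    have h := aux_key A N hN hb
    rw [hbk] at h
    simpa using h.symm
  intro x hx
  have h := aux_key A N hN hx
  have e : A.m 0 (fun _ : Fin 0 => x) = A.m 0 (fun _ : Fin 0 => b) := by
    congr 1
    funext j
    exact j.elim0
  rw [e, hb0] at h
  refine haniso _ ?_ h
  unfold kuranishi
  exact Submodule.sum_mem _ fun k _ => aux_mem A hx k
end
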